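/- arXiv:2506.21700 — 4 statements merged into one kernel-verified Lean document; each statement's English description precedes it below -/
import Mathlib

section
/- For the central global flux scheme applied to conservation laws with fluxes f, g, the resulting update is local: the combination 𝓕̄_{i+1/2,j+1/2} − 𝓕̄_{i−1/2,j+1/2} − 𝓕̄_{i+1/2,j−1/2} + 𝓕̄_{i−1/2,j−1/2} equals (Δy/4)(jump in f averaged in y) + (Δx/4)(jump in g averaged in x); specifically, all global (recursively integrated) contributions cancel and the result equals (Δy Δx)·[(1/Δx)⟨[f]⟩ + (1/Δy)[⟨g⟩]] in terms of the local values f_{i±1,j±1}, g_{i±1,j±1}, where ⟨a_{i,·}⟩_j := (a_{i,j+1} + 2a_{i,j} + a_{i,j−1})/4 and [a_{i,·}]_j := (a_{i,j+1} − a_{i,j−1})/2. -/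
/-- For the central global flux scheme, all recursively integrated (global)
contributions cancel: the corner-average flux balance around cell (i,j) equals
ΔxΔy·[(1/Δx)⟨[f]⟩ + (1/Δy)[⟨g⟩]] in terms of local flux values only. -/
theorem central_scheme_is_local
    (f g F G : ℤ → ℤ → ℝ) (Δx Δy : ℝ) (hΔx : 0 < Δx) (hΔy : 0 < Δy)
    (hF : ∀ i j : ℤ, F i j = F i (j-1) + (Δy/2) * (f i (j-1) + f i j))
    (hG : ∀ i j : ℤ, G i j = G (i-1) j + (Δx/2) * (g (i-1) j + g i j))
    (calF : ℤ → ℤ → ℝ) (hcal : ∀ i j, calF i j = F i j + G i j)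
    (Fbar : ℤ → ℤ → ℝ)
    (hFbar : ∀ a b : ℤ,
      Fbar a b = (calF a b + calF (a+1) b + calF a (b+1) + calF (a+1) (b+1)) / 4)
    (i j : ℤ) :
    Fbar i j - Fbar (i-1) j - Fbar i (j-1) + Fbar (i-1) (j-1)
      = Δx * Δy *
        ((1/Δx) * ((((f (i+1) (j+1) - f (i-1) (j+1)) / 2)
                    + 2 * ((f (i+1) j - f (i-1) j) / 2)
                    + ((f (i+1) (j-1) - f (i-1) (j-1)) / 2)) / 4)
         + (1/Δy) * ((((g (i+1) (j+1) + 2 * g i (j+1) + g (i-1) (j+1)) / 4)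
                      - ((g (i+1) (j-1) + 2 * g i (j-1) + g (i-1) (j-1)) / 4)) / 2)) := by
  have e1 : ∀ a, F a (j+1) = F a j + (Δy/2) * (f a j + f a (j+1)) := by
    intro a; have := hF a (j+1); simpa using this
  have e2 : ∀ a, F a j = F a (j-1) + (Δy/2) * (f a (j-1) + f a j) := fun a => hF a j
  have e3 : ∀ b, G (i+1) b = G i b + (Δx/2) * (g i b + g (i+1) b) := by
    intro b; have := hG (i+1) b; simpa using this
  have e4 : ∀ b, G i b = G (i-1) b + (Δx/2) * (g (i-1) b + g i b) := fun b => hG i b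
  simp only [hFbar, hcal, sub_add_cancel, show i - 1 + 1 = i from by ring,
    show j - 1 + 1 = j from by ring]
  rw [e1 (i+1), e1 i, e1 (i-1), e2 (i+1), e2 i, e2 (i-1), e3 (j+1), e3 j, e3 (j-1), e4 (j+1), e4 j, e4 (j-1)]
  field_simp
  ring
end

section
/- Lake at rest preservation: if the velocity is zero and the free surface η_i := h_i + b_i is constant (η_i = η₀ for all i), then the 1D global flux increments vanish: f_i + R^x_i − f_{i−1} − R^x_{i−1} = 0, where f_i = g h_i²/2 is the hydrostatic momentum flux and R^x is defined by the trapezoidal quadrature R^x_i = R^x_{i−1} + g·((h_i + h_{i−1})/2)·(b_i − b_{i−1}). -/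
/-- Lake at rest preservation in 1D: with zero velocity and constant free
surface h_i + b_i = η₀, the global flux increments vanish. -/
theorem lake_at_rest_preservation
    (g : ℝ) (hg : 0 < g) (h b : ℤ → ℝ) (η0 : ℝ)
    (hsurf : ∀ i : ℤ, h i + b i = η0)
    (f : ℤ → ℝ) (hf : ∀ i : ℤ, f i = g * (h i)^2 / 2)
    (R : ℤ → ℝ)
    (hR : ∀ i : ℤ, R i = R (i-1) + g * ((h i + h (i-1)) / 2) * (b i - b (i-1))) :
    ∀ i : ℤ, f i + R i - f (i-1) - R (i-1) = 0 := by
  intro i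
  have h1 := hsurf i
  have h2 := hsurf (i-1)
  have hb : b i - b (i-1) = h (i-1) - h i := by linarith
  rw [hf i, hf (i-1), hR i, hb]
  ring
end

section
/- Semi-discrete energy decay for the global flux acoustics scheme: for periodic grid functions u, v, p on an N×N grid and the tensor-product operators D̄ₓₓ = (D₊D₋)⊗(M₊M₋), D̄ᵧᵧ = (M₊M₋)⊗(D₊D₋), Dₓᵧ = (D₊M₋)⊗(D₊M₋) built from circulant difference D₊ (with D₋ = −D₊ᵀ) and averaging M₊ (with M₋ = M₊ᵀ) matrices, the dissipation satisfies pᵀD̄ₓₓp + pᵀD̄ᵧᵧp + uᵀD̄ₓₓu + uᵀDₓᵧv + vᵀDₓᵧu + vᵀD̄ᵧᵧv = −‖(D⊗M)p‖² − ‖(M⊗D)p‖² − ‖(D⊗M)u + (M⊗D)v‖² ≤ 0, where D := D₋ and M := M₋. -/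
open Matrix Kronecker

noncomputable def Scirc (N : ℕ) [NeZero N] : Matrix (Fin N) (Fin N) ℝ :=
  Matrix.of fun i j => if i + 1 = j then 1 else 0

lemma Scirc_mul_transpose (N : ℕ) [NeZero N] :
    Scirc N * (Scirc N)ᵀ = (1 : Matrix (Fin N) (Fin N) ℝ) := by
  ext i j
  simp only [Scirc, Matrix.mul_apply, Matrix.transpose_apply, Matrix.of_apply, Matrix.one_apply,
    ite_mul, one_mul, zero_mul]
  rw [Finset.sum_ite_eq Finset.univ (i+1) (fun k => if j + 1 = k then (1:ℝ) else 0)]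
  simp [add_left_inj, eq_comm]

lemma neg_kron' {m n : Type*} (A : Matrix m m ℝ) (B : Matrix n n ℝ) :
    (-A) ⊗ₖ B = -(A ⊗ₖ B) := by
  ext ⟨i,j⟩ ⟨k,l⟩; simp

lemma kron_neg' {m n : Type*} (A : Matrix m m ℝ) (B : Matrix n n ℝ) :
    A ⊗ₖ (-B) = -(A ⊗ₖ B) := by
  ext ⟨i,j⟩ ⟨k,l⟩; simp

lemma kron_transpose' {m n : Type*} (A : Matrix m m ℝ) (B : Matrix n n ℝ) :
    (A ⊗ₖ B)ᵀ = Aᵀ ⊗ₖ Bᵀ := by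
  ext ⟨i,j⟩ ⟨k,l⟩; simp

lemma dot_key' {m : Type*} [Fintype m] (X Y : Matrix m m ℝ) (x y : m → ℝ) :
    x ⬝ᵥ (Xᵀ * Y).mulVec y = X.mulVec x ⬝ᵥ Y.mulVec y := by
  rw [← Matrix.mulVec_mulVec, Matrix.dotProduct_mulVec, Matrix.vecMul_transpose]

lemma dot_self_nonneg' {m : Type*} [Fintype m] (x : m → ℝ) : 0 ≤ x ⬝ᵥ x :=
  Finset.sum_nonneg fun i _ => mul_self_nonneg (x i)

lemma Dplus_eq {N : ℕ} [NeZero N] (Dplus : Matrix (Fin N) (Fin N) ℝ)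
    (hD : ∀ (x : Fin N → ℝ) (k : Fin N), Dplus.mulVec x k = x (k + 1) - x k) :
    Dplus = Scirc N - 1 := by
  ext i j
  have := hD (Pi.single j 1) i
  simp only [Matrix.mulVec_single_one, Matrix.col_apply] at this
  simp only [this, Pi.single_apply, Scirc, Matrix.sub_apply, Matrix.of_apply, Matrix.one_apply]

lemma Mplus_eq {N : ℕ} [NeZero N] (Mplus : Matrix (Fin N) (Fin N) ℝ)
    (hM : ∀ (x : Fin N → ℝ) (k : Fin N), Mplus.mulVec x k = (x k + x (k + 1)) / 2) :
    Mplus = (2⁻¹ : ℝ) • (1 + Scirc N) := by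
  ext i j
  have := hM (Pi.single j 1) i
  simp only [Matrix.mulVec_single_one, Matrix.col_apply] at this
  simp only [this, Pi.single_apply, Scirc, Matrix.smul_apply, Matrix.add_apply, Matrix.of_apply,
    Matrix.one_apply, smul_eq_mul]
  by_cases h1 : i + 1 = j <;> by_cases h2 : i = j <;> simp [h1, h2] <;> ring

lemma hcomm' {N : ℕ} [NeZero N] (Dplus Mplus : Matrix (Fin N) (Fin N) ℝ)
    (hD : ∀ (x : Fin N → ℝ) (k : Fin N), Dplus.mulVec x k = x (k + 1) - x k)
    (hM : ∀ (x : Fin N → ℝ) (k : Fin N), Mplus.mulVec x k = (x k + x (k + 1)) / 2) :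
    Dplus * Mplusᵀ = -(Mplus * Dplusᵀ) := by
  rw [Dplus_eq Dplus hD, Mplus_eq Mplus hM]
  simp only [Matrix.transpose_smul, Matrix.transpose_add, Matrix.transpose_sub,
    Matrix.transpose_one, Matrix.mul_smul, Matrix.smul_mul, Matrix.sub_mul, Matrix.mul_sub,
    Matrix.add_mul, Matrix.mul_add, Matrix.one_mul, Matrix.mul_one, Scirc_mul_transpose,
    smul_neg, neg_smul, neg_sub]
  module

/-- Semi-discrete energy decay for the global flux acoustics scheme:
with D̄ₓₓ = (D₊D₋)⊗(M₊M₋), D̄ᵧᵧ = (M₊M₋)⊗(D₊D₋), Dₓᵧ = (D₊M₋)⊗(D₊M₋) built from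
circulant D₊ (D₋ = −D₊ᵀ) and M₊ (M₋ = M₊ᵀ), the dissipation satisfies
pᵀD̄ₓₓp + pᵀD̄ᵧᵧp + uᵀD̄ₓₓu + uᵀDₓᵧv + vᵀDₓᵧu + vᵀD̄ᵧᵧv
= −‖(D⊗M)p‖² − ‖(M⊗D)p‖² − ‖(D⊗M)u + (M⊗D)v‖² ≤ 0, where D = D₋, M = M₋. -/
theorem semidiscrete_energy_decay {N : ℕ} [NeZero N]
    (Dplus Mplus : Matrix (Fin N) (Fin N) ℝ)
    (hD : ∀ (x : Fin N → ℝ) (k : Fin N), Dplus.mulVec x k = x (k + 1) - x k)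
    (hM : ∀ (x : Fin N → ℝ) (k : Fin N), Mplus.mulVec x k = (x k + x (k + 1)) / 2)
    (u v p : Fin N × Fin N → ℝ) :
    letI D : Matrix (Fin N) (Fin N) ℝ := -Dplusᵀ
    letI M : Matrix (Fin N) (Fin N) ℝ := Mplusᵀ
    letI Dxx := (Dplus * D) ⊗ₖ (Mplus * M)
    letI Dyy := (Mplus * M) ⊗ₖ (Dplus * D)
    letI Dxy := (Dplus * M) ⊗ₖ (Dplus * M)
    (p ⬝ᵥ Dxx.mulVec p + p ⬝ᵥ Dyy.mulVec p + u ⬝ᵥ Dxx.mulVec u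
        + u ⬝ᵥ Dxy.mulVec v + v ⬝ᵥ Dxy.mulVec u + v ⬝ᵥ Dyy.mulVec v
      = -((D ⊗ₖ M).mulVec p ⬝ᵥ (D ⊗ₖ M).mulVec p)
        - ((M ⊗ₖ D).mulVec p ⬝ᵥ (M ⊗ₖ D).mulVec p)
        - (((D ⊗ₖ M).mulVec u + (M ⊗ₖ D).mulVec v) ⬝ᵥ
            ((D ⊗ₖ M).mulVec u + (M ⊗ₖ D).mulVec v))) ∧
    (p ⬝ᵥ Dxx.mulVec p + p ⬝ᵥ Dyy.mulVec p + u ⬝ᵥ Dxx.mulVec u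
        + u ⬝ᵥ Dxy.mulVec v + v ⬝ᵥ Dxy.mulVec u + v ⬝ᵥ Dyy.mulVec v ≤ 0) := by
  set D : Matrix (Fin N) (Fin N) ℝ := -Dplusᵀ with hDdef
  set M : Matrix (Fin N) (Fin N) ℝ := Mplusᵀ with hMdef
  set A : Matrix (Fin N × Fin N) (Fin N × Fin N) ℝ := D ⊗ₖ M with hAdef
  set B : Matrix (Fin N × Fin N) (Fin N × Fin N) ℝ := M ⊗ₖ D with hBdef
  -- basic transpose facts
  have hDt : Dᵀ = -Dplus := by rw [hDdef]; simp
  have hMt : Mᵀ = Mplus := by rw [hMdef]; simp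
  have f1 : Dplus * D = -(Dᵀ * D) := by rw [hDt, Matrix.neg_mul, neg_neg]
  have f2 : Mplus * M = Mᵀ * M := by rw [hMt]
  have f3 : Dplus * M = -(Dᵀ * M) := by rw [hDt, Matrix.neg_mul, neg_neg]
  have f4 : Dplus * M = Mᵀ * D := by
    rw [hMt, hDdef, hMdef, Matrix.mul_neg, ← hcomm' Dplus Mplus hD hM]
  have hxx : (Dplus * D) ⊗ₖ (Mplus * M) = -(Aᵀ * A) := by
    rw [hAdef, kron_transpose', ← Matrix.mul_kronecker_mul, f1, f2, neg_kron']
  have hyy : (Mplus * M) ⊗ₖ (Dplus * D) = -(Bᵀ * B) := by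
    rw [hBdef, kron_transpose', ← Matrix.mul_kronecker_mul, f1, f2, kron_neg']
  have hxy1 : (Dplus * M) ⊗ₖ (Dplus * M) = -(Aᵀ * B) := by
    rw [hAdef, hBdef, kron_transpose', ← Matrix.mul_kronecker_mul]
    nth_rewrite 1 [f3]
    rw [f4, neg_kron']
  have hxy2 : (Dplus * M) ⊗ₖ (Dplus * M) = -(Bᵀ * A) := by
    rw [hAdef, hBdef, kron_transpose', ← Matrix.mul_kronecker_mul]
    nth_rewrite 2 [f3]
    rw [f4, kron_neg']
  have key : ∀ (X Y : Matrix (Fin N × Fin N) (Fin N × Fin N) ℝ)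
      (x y : Fin N × Fin N → ℝ), x ⬝ᵥ (-(Xᵀ * Y)).mulVec y
        = -(X.mulVec x ⬝ᵥ Y.mulVec y) := by
    intro X Y x y
    rw [Matrix.neg_mulVec, dotProduct_neg, dot_key']
  have heq : p ⬝ᵥ ((Dplus * D) ⊗ₖ (Mplus * M)).mulVec p
      + p ⬝ᵥ ((Mplus * M) ⊗ₖ (Dplus * D)).mulVec p
      + u ⬝ᵥ ((Dplus * D) ⊗ₖ (Mplus * M)).mulVec u
      + u ⬝ᵥ ((Dplus * M) ⊗ₖ (Dplus * M)).mulVec v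
      + v ⬝ᵥ ((Dplus * M) ⊗ₖ (Dplus * M)).mulVec u
      + v ⬝ᵥ ((Mplus * M) ⊗ₖ (Dplus * D)).mulVec v
      = -(A.mulVec p ⬝ᵥ A.mulVec p) - (B.mulVec p ⬝ᵥ B.mulVec p)
        - ((A.mulVec u + B.mulVec v) ⬝ᵥ (A.mulVec u + B.mulVec v)) := by
    nth_rewrite 2 [hxy2]
    rw [hxx, hyy, hxy1, key, key, key, key, key, key]
    rw [dotProduct_add, add_dotProduct, add_dotProduct]
    rw [dotProduct_comm (B.mulVec v) (A.mulVec u)]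
    ring
  constructor
  · exact heq
  · rw [heq]
    have h1 := dot_self_nonneg' (A.mulVec p)
    have h2 := dot_self_nonneg' (B.mulVec p)
    have h3 := dot_self_nonneg' (A.mulVec u + B.mulVec v)
    linarith
end

section
/- In 1D, the upwind global flux scheme is independent of the recursion starting value: with 𝓕_i = f(q_i) − R_i, R_i = R_{i−1} + (Δx/2)(s_{i−1} + s_i), and projectors satisfying I⁺ + I⁻ = I at each interface, the cell update −(Î𝓕_{i+1/2} − Î𝓕_{i−1/2})/Δx with Î𝓕_{i+1/2} := I⁺_{i+1/2}𝓕_i + I⁻_{i+1/2}𝓕_{i+1} does not depend on the value R_{i−1}; all occurrences of R_{i−1} cancel. -/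
open Matrix

/-- In 1D the upwind global flux scheme is independent of the recursion
starting value: all occurrences of R_{i−1} cancel in the flux difference. -/
theorem upwind_global_flux_local {n : ℕ}
    (fq s R : ℤ → Fin n → ℝ) (Δx : ℝ) (hΔx : 0 < Δx)
    (hR : ∀ i : ℤ, R i = R (i-1) + (Δx/2) • (s (i-1) + s i))
    (Iplus Iminus : ℤ → Matrix (Fin n) (Fin n) ℝ)
    (hI : ∀ i : ℤ, Iplus i + Iminus i = 1)
    (calF : ℤ → Fin n → ℝ) (hcalF : ∀ i : ℤ, calF i = fq i - R i)
    (Fhat : ℤ → Fin n → ℝ)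
    (hFhat : ∀ i : ℤ, Fhat i = (Iplus i).mulVec (calF i) + (Iminus i).mulVec (calF (i+1)))
    (i : ℤ) :
    Fhat i - Fhat (i-1)
      = (Iminus i).mulVec (fq (i+1) - fq i - (Δx/2) • (s (i+1) + s i))
        + (Iplus (i-1)).mulVec (fq i - fq (i-1) - (Δx/2) • (s i + s (i-1))) := by
  have hA : Iplus i = 1 - Iminus i := eq_sub_of_add_eq (hI i)
  have hB : Iminus (i-1) = 1 - Iplus (i-1) := eq_sub_of_add_eq' (hI (i-1))
  have hRi1 := hR (i+1)
  simp only [add_sub_cancel_right] at hRi1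
  have hRi := hR i
  rw [hFhat i, hFhat (i-1), hA, hB, sub_add_cancel, hcalF (i+1), hcalF i,
    hcalF (i-1), hRi1, hRi]
  simp only [Matrix.sub_mulVec, Matrix.one_mulVec, Matrix.mulVec_sub,
    Matrix.mulVec_add, Matrix.mulVec_smul]
  module
end
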